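/- Let M be a finite loopless matroid of rank r on ground set E, and let Berg(M) ⊆ ℝ^E denote the set of functions w : E → ℝ satisfying the tropical circuit condition, equipped with the subspace topology from ℝ^E. Let g : ℝ^r → ℝ be continuous and invariant under every permutation of the coordinates. Then there exists a unique continuous function G : Berg(M) → ℝ such that for every basis B of M, every enumeration b_1, …, b_r of B, and every a : B → ℝ, one has G(φ_B(a)) = g(a(b_1), …, a(b_r)). -/

import Mathlib

open Set

/-- A circuit of a matroid: a minimal dependent set. -/
def MatroidCircuit {α : Type*} (M : Matroid α) (C : Set α) : Prop :=
  M.Dep C ∧ ∀ D ⊆ C, M.Dep D → D = C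

/-- `w` satisfies the tropical circuit condition (i.e. lies in the support of the
Bergman fan of `M`, which carries the subspace topology from `ℝ^E`): on every circuit
the minimum of `w` is attained by at least two distinct elements. -/
def TropCircuitCond {α : Type*} (M : Matroid α) (w : α → ℝ) : Prop :=
  ∀ C, MatroidCircuit M C →
    ∃ x ∈ C, ∃ y ∈ C, x ≠ y ∧ w x = w y ∧ ∀ c ∈ C, w x ≤ w c

/-- The fundamental circuit of `e` with respect to a basis `B`: the unique circuit
contained in `B ∪ {e}` (expressed as an intersection, which equals that circuit by
uniqueness). -/
def fundCircuit {α : Type*} (M : Matroid α) (B : Set α) (e : α) : Set α :=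
  ⋂₀ {C | MatroidCircuit M C ∧ e ∈ C ∧ C ⊆ insert e B}

open Classical in
/-- The piecewise-linear section `φ_B` : `φ_B(a)(e) = a e` for `e ∈ B` and
`φ_B(a)(e) = min { a c : c ∈ C(e,B), c ≠ e }` for `e ∉ B`. -/
noncomputable def phiB {α : Type*} (M : Matroid α) (B : Set α) (a : α → ℝ) : α → ℝ :=
  fun e => if e ∈ B then a e else sInf (a '' (fundCircuit M B e \ {e}))

namespace BergAux

variable {α : Type*} [Fintype α] {M : Matroid α}

lemma dep_of_not_indep (hE : M.E = Set.univ) {D : Set α} (h : ¬ M.Indep D) : M.Dep D :=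
  ⟨h, by simp [hE]⟩

lemma exists_circuit_subset {D : Set α} (hD : M.Dep D) : ∃ C ⊆ D, MatroidCircuit M C := by
  classical
  have hfin : ({D' : Set α | D' ⊆ D ∧ M.Dep D'}).Finite := Set.toFinite _
  obtain ⟨C, hC, hmin⟩ := Set.exists_min_image _ Set.ncard hfin ⟨D, Subset.rfl, hD⟩
  refine ⟨C, hC.1, hC.2, fun D' hD'C hD' => ?_⟩
  have := hmin D' ⟨hD'C.trans hC.1, hD'⟩
  exact Set.eq_of_subset_of_ncard_le hD'C this (Set.toFinite _)

lemma circuit_dep {C : Set α} (hC : MatroidCircuit M C) : M.Dep C := hC.1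

lemma circuit_diff_indep {C : Set α} (hC : MatroidCircuit M C) {x : α} (hx : x ∈ C) :
    M.Indep (C \ {x}) := by
  by_contra h
  have hdep : M.Dep (C \ {x}) := ⟨h, (diff_subset.trans hC.1.subset_ground)⟩
  have h2 := hC.2 _ diff_subset hdep
  have : x ∈ C \ {x} := by rw [h2]; exact hx
  exact this.2 rfl

lemma circuit_mem_closure {C : Set α} (hC : MatroidCircuit M C) {x : α} (hx : x ∈ C) :
    x ∈ M.closure (C \ {x}) := by
  have hind := circuit_diff_indep hC hx
  have hd : M.Dep (insert x (C \ {x})) := by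
    rw [insert_diff_singleton, insert_eq_of_mem hx]; exact hC.1
  exact (hind.insert_dep_iff.1 hd).1

lemma circuit_nontrivial (hloopless : ∀ e : α, M.Indep {e}) {C : Set α}
    (hC : MatroidCircuit M C) : ∃ x ∈ C, ∃ y ∈ C, x ≠ y := by
  by_contra h
  push_neg at h
  rcases Set.eq_empty_or_nonempty C with hC0 | ⟨x, hx⟩
  · exact hC.1.1 (by rw [hC0]; exact M.empty_indep)
  · have hCx : C = {x} :=
      Set.eq_singleton_iff_unique_mem.2 ⟨hx, fun y hy => h y hy x hx⟩
    exact hC.1.1 (hCx ▸ hloopless x)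

/-- Any circuit containing `e` inside `insert e B` (for `B` a base) is uniquely determined. -/
lemma circuit_in_base_insert_eq (hE : M.E = Set.univ) {B : Set α} (hB : M.IsBase B) {e : α}
    (he : e ∉ B) {C : Set α} (hC : MatroidCircuit M C) (heC : e ∈ C) (hCB : C ⊆ insert e B) :
    C = insert e {c ∈ B | e ∉ M.closure (B \ {c})} := by
  have hCe : C \ {e} ⊆ B := by
    intro x hx
    rcases hCB hx.1 with h | h
    · exact absurd h hx.2
    · exact h
  ext x
  constructor
  · rintro hxC
    rcases eq_or_ne x e with rfl | hxe
    · exact mem_insert _ _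
    refine mem_insert_iff.2 (Or.inr ⟨hCe ⟨hxC, hxe⟩, fun hecl => ?_⟩)
    -- suppose e ∈ closure (B \ {x}); derive x ∈ closure (B \ {x}), contradiction
    have hxB : x ∈ B := hCe ⟨hxC, hxe⟩
    have hsub : C \ {x} ⊆ M.closure (B \ {x}) := by
      intro y hy
      rcases hCB hy.1 with rfl | hyB
      · exact hecl
      · exact M.subset_closure (B \ {x}) (by rw [hE]; exact subset_univ _) ⟨hyB, hy.2⟩
    have hx1 : x ∈ M.closure (C \ {x}) := circuit_mem_closure hC hxC
    have hx2 : M.closure (C \ {x}) ⊆ M.closure (B \ {x}) := by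
      have := M.closure_subset_closure hsub
      rwa [M.closure_closure] at this
    exact hB.indep.notMem_closure_sdiff_of_mem hxB (hx2 hx1)
  · rintro (rfl | ⟨hxB, hecl⟩)
    · exact heC
    by_contra hxC
    have : C \ {e} ⊆ B \ {x} := fun y hy => ⟨hCe hy, fun h => hxC (h ▸ hy.1)⟩
    have : e ∈ M.closure (B \ {x}) := by
      have h1 := circuit_mem_closure hC heC
      exact M.closure_subset_closure this h1
    exact hecl this

lemma fundCircuit_spec (hE : M.E = Set.univ) {B : Set α} (hB : M.IsBase B) {e : α} (he : e ∉ B) :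
    MatroidCircuit M (fundCircuit M B e) ∧ e ∈ fundCircuit M B e ∧
      fundCircuit M B e ⊆ insert e B := by
  have hdep : M.Dep (insert e B) := hB.insert_dep (by rw [hE]; exact ⟨mem_univ _, he⟩)
  obtain ⟨C₀, hC₀B, hC₀⟩ := exists_circuit_subset hdep
  have heC₀ : e ∈ C₀ := by
    by_contra h
    have hsub : C₀ ⊆ B := fun x hx =>
      (hC₀B hx).resolve_left (fun hxe => h (hxe ▸ hx))
    exact hC₀.1.1 (hB.indep.subset hsub)
  have hkey : ∀ C, MatroidCircuit M C ∧ e ∈ C ∧ C ⊆ insert e B → C = C₀ := by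
    intro C ⟨hC, heC, hCB⟩
    rw [circuit_in_base_insert_eq hE hB he hC heC hCB,
      circuit_in_base_insert_eq hE hB he hC₀ heC₀ hC₀B]
  have hset : {C | MatroidCircuit M C ∧ e ∈ C ∧ C ⊆ insert e B} = {C₀} := by
    apply Set.eq_singleton_iff_unique_mem.2
    exact ⟨⟨hC₀, heC₀, hC₀B⟩, hkey⟩
  rw [fundCircuit, hset, sInter_singleton]
  exact ⟨hC₀, heC₀, hC₀B⟩

lemma fundCircuit_diff_subset (hE : M.E = Set.univ) {B : Set α} (hB : M.IsBase B) {e : α}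
    (he : e ∉ B) : fundCircuit M B e \ {e} ⊆ B := by
  intro x hx
  rcases (fundCircuit_spec hE hB he).2.2 hx.1 with h | h
  · exact absurd h hx.2
  · exact h

lemma fundCircuit_not_closure (hE : M.E = Set.univ) {B : Set α} (hB : M.IsBase B) {e : α}
    (he : e ∉ B) {c : α} (hc : c ∈ fundCircuit M B e \ {e}) :
    c ∈ B ∧ e ∉ M.closure (B \ {c}) := by
  obtain ⟨hC, heC, hCB⟩ := fundCircuit_spec hE hB he
  have := circuit_in_base_insert_eq hE hB he hC heC hCB
  have hx : c ∈ insert e {c ∈ B | e ∉ M.closure (B \ {c})} := this ▸ hc.1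
  rcases hx with rfl | hx
  · exact absurd rfl hc.2
  · exact ⟨hx.1, hx.2⟩

/-- An independent set whose cardinality equals the (common) rank is a base. -/
lemma base_of_indep_ncard {r : ℕ} (hrank : ∀ B, M.IsBase B → B.ncard = r) {I : Set α}
    (hI : M.Indep I) (hcard : I.ncard = r) : M.IsBase I := by
  obtain ⟨B₁, hB₁, hIB₁⟩ := hI.exists_isBase_superset
  have : I = B₁ := Set.eq_of_subset_of_ncard_le hIB₁
    (by rw [hrank B₁ hB₁, hcard]) (Set.toFinite _)
  exact this ▸ hB₁

lemma base_exchange_in (hE : M.E = Set.univ) {r : ℕ} (hrank : ∀ B, M.IsBase B → B.ncard = r)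
    {B : Set α} (hB : M.IsBase B) {e c : α} (he : e ∉ B) (hc : c ∈ B)
    (hecl : e ∉ M.closure (B \ {c})) : M.IsBase (insert e (B \ {c})) := by
  have hBc : M.Indep (B \ {c}) := hB.indep.subset diff_subset
  have hne : e ∉ B \ {c} := fun h => he h.1
  have hind : M.Indep (insert e (B \ {c})) := by
    rw [hBc.insert_indep_iff_of_notMem hne]
    exact ⟨by rw [hE]; exact mem_univ _, hecl⟩
  apply base_of_indep_ncard hrank hind
  rw [Set.ncard_insert_of_notMem hne (Set.toFinite _),
    Set.ncard_diff_singleton_of_mem hc, hrank B hB]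
  have : r ≠ 0 := by
    intro h
    rw [h] at hrank
    have := hrank B hB
    exact he ((Set.ncard_eq_zero (Set.toFinite _)).1 this ▸ hc).elim
  omega

lemma strong_exchange (hE : M.E = Set.univ) {r : ℕ} (hrank : ∀ B, M.IsBase B → B.ncard = r)
    {B B' : Set α} (hB : M.IsBase B) (hB' : M.IsBase B') {e : α} (he : e ∈ B' \ B) :
    ∃ c ∈ fundCircuit M B e \ {e}, c ∈ B ∧ M.IsBase (insert c (B' \ {e})) := by
  obtain ⟨hC, heC, hCB⟩ := fundCircuit_spec hE hB he.2
  set C := fundCircuit M B e with hCdef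
  -- find c ∈ C \ {e} not in closure (B' \ {e})
  have : ¬ (C \ {e} ⊆ M.closure (B' \ {e})) := by
    intro hsub
    have h1 : e ∈ M.closure (C \ {e}) := circuit_mem_closure hC heC
    have h2 : M.closure (C \ {e}) ⊆ M.closure (B' \ {e}) := by
      have := M.closure_subset_closure hsub
      rwa [M.closure_closure] at this
    exact hB'.indep.notMem_closure_sdiff_of_mem he.1 (h2 h1)
  obtain ⟨c, hcC, hccl⟩ := not_subset.1 this
  have hcB : c ∈ B := fundCircuit_diff_subset hE hB he.2 hcC
  have hcB' : c ∉ B' := by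
    intro h
    exact hccl (M.subset_closure (B' \ {e}) (by rw [hE]; exact subset_univ _)
      ⟨h, fun hce => (hcC.2 hce)⟩)
  exact ⟨c, hcC, hcB, base_exchange_in hE hrank hB' hcB' he.1 hccl⟩

/-- Weight of a finite set. -/
noncomputable def wsum (w : α → ℝ) (S : Set α) : ℝ := ∑ x ∈ (Set.toFinite S).toFinset, w x

lemma wsum_exchange (w : α → ℝ) {S : Set α} {e c : α} (he : e ∉ S) (hc : c ∈ S) :
    wsum w (insert e (S \ {c})) = wsum w S - w c + w e := by
  classical
  unfold wsum
  rw [Set.Finite.toFinset_insert]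
  rw [Finset.sum_insert (by intro h; exact he (Set.mem_of_mem_diff ((Set.Finite.mem_toFinset _).1 h)))]
  have : (Set.toFinite (S \ {c})).toFinset = (Set.toFinite S).toFinset.erase c := by
    ext x; simp only [Set.Finite.mem_toFinset, Set.mem_diff, Set.mem_singleton_iff,
      Finset.mem_erase, and_comm]
  rw [this, Finset.sum_erase_eq_sub (by simpa using hc)]
  ring

/-- Local optimality (w.r.t. fundamental-circuit exchanges) implies global optimality. -/
lemma max_of_local (hE : M.E = Set.univ) {r : ℕ} (hrank : ∀ B, M.IsBase B → B.ncard = r)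
    {B : Set α} (hB : M.IsBase B) (w : α → ℝ)
    (hloc : ∀ e ∉ B, ∀ c ∈ fundCircuit M B e \ {e}, w e ≤ w c) :
    ∀ B', M.IsBase B' → wsum w B' ≤ wsum w B := by
  intro B' hB'
  generalize hn : (B' \ B).ncard = n
  induction n generalizing B' with
  | zero =>
    have hsub : B' ⊆ B := by
      rw [Set.ncard_eq_zero (Set.toFinite _)] at hn
      exact diff_eq_empty.1 hn
    rw [hB'.eq_of_subset_isBase hB hsub]
  | succ n ih =>
    have hne : (B' \ B).Nonempty := by
      rw [Set.nonempty_iff_ne_empty]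
      intro h
      rw [h, Set.ncard_empty] at hn
      omega
    obtain ⟨e, he⟩ := hne
    obtain ⟨c, hcC, hcB, hbase⟩ := strong_exchange hE hrank hB hB' he
    have hwe : w e ≤ w c := hloc e he.2 c hcC
    have hcB' : c ∉ B' := by
      intro h
      have := hbase
      -- c ∈ B' and insert c (B' \ {e}) base of card r with c already there:
      -- directly: if c ∈ B', then insert c (B' \ {e}) = B' \ {e} ∪ {c} ⊆ B', proper subset
      have hsub : insert c (B' \ {e}) ⊆ B' := insert_subset h diff_subset
      have := hbase.eq_of_subset_isBase hB' hsub
      have heB' : e ∈ insert c (B' \ {e}) := by rw [this]; exact he.1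
      rcases heB' with h1 | h1
      · exact he.2 (h1 ▸ hcB)
      · exact h1.2 rfl
    have hsum : wsum w (insert c (B' \ {e})) = wsum w B' - w e + w c :=
      wsum_exchange w hcB' he.1
    have hcount : ((insert c (B' \ {e})) \ B).ncard = n := by
      have hset : (insert c (B' \ {e})) \ B = (B' \ B) \ {e} := by
        ext x
        simp only [Set.mem_diff, Set.mem_insert_iff, Set.mem_singleton_iff]
        constructor
        · rintro ⟨rfl | ⟨hx1, hx2⟩, hxB⟩
          · exact absurd hcB hxB
          · exact ⟨⟨hx1, hxB⟩, hx2⟩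
        · rintro ⟨⟨hx1, hxB⟩, hx2⟩
          exact ⟨Or.inr ⟨hx1, hx2⟩, hxB⟩
      rw [hset, Set.ncard_diff_singleton_of_mem he, hn]
      omega
    have := ih _ hbase hcount
    linarith

lemma strictMono_bound {j r : ℕ} {F : Fin j → Fin r} (hF : StrictMono F) (k : Fin j) :
    (F k : ℕ) + j ≤ (k : ℕ) + r := by
  have aux : ∀ d (k : Fin j), (k : ℕ) + d + 1 = j → (F k : ℕ) + d + 1 ≤ r := by
    intro d
    induction d with
    | zero => intro k _; have := (F k).isLt; omega
    | succ n ihn =>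
      intro k hk
      have hk1 : (k : ℕ) + 1 < j := by omega
      have hlt : F k < F ⟨(k : ℕ) + 1, hk1⟩ := hF (by simp [Fin.lt_def])
      have := ihn ⟨(k : ℕ) + 1, hk1⟩ (by simp; omega)
      simp only [Fin.lt_def] at hlt
      omega
  have hkj : (k : ℕ) < j := k.isLt
  have := aux (j - 1 - (k : ℕ)) k (by omega)
  omega

/-- The set of the `j` largest indices of `Fin r`. -/
def topIdx (r j : ℕ) : Finset (Fin r) := Finset.univ.filter (fun i : Fin r => r ≤ (i : ℕ) + j)

lemma topIdx_card {r j : ℕ} (hj : j ≤ r) : (topIdx r j).card = j := by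
  classical
  have : topIdx r j = Finset.univ.map
      ⟨fun k : Fin j => (⟨(k : ℕ) + r - j, by have := k.isLt; omega⟩ : Fin r),
        show Function.Injective _ from fun k1 k2 h => by
          have h1 := k1.isLt; have h2 := k2.isLt
          simp only [Fin.mk.injEq] at h
          exact Fin.ext (by omega)⟩ := by
    ext i
    simp only [topIdx, Finset.mem_filter, Finset.mem_univ, true_and, Finset.mem_map,
      Function.Embedding.coeFn_mk]
    constructor
    · intro hi
      exact ⟨⟨(i : ℕ) + j - r, by have := i.isLt; omega⟩,
        Fin.ext (by simp; have := i.isLt; omega)⟩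
    · rintro ⟨k, rfl⟩
      simp
      have := k.isLt
      omega
  rw [this, Finset.card_map, Finset.card_univ, Fintype.card_fin]

lemma sum_le_topIdx {r : ℕ} {y : Fin r → ℝ} (hy : Monotone y) {K : Finset (Fin r)} :
    ∑ i ∈ K, y i ≤ ∑ i ∈ topIdx r K.card, y i := by
  classical
  set j := K.card with hj
  have hjr : j ≤ r := by
    have := Finset.card_le_univ K
    simpa [Finset.card_univ] using this
  have hKmap : K = Finset.univ.map (K.orderEmbOfFin hj.symm).toEmbedding := by
    apply Finset.coe_injective
    rw [Finset.coe_map, Finset.coe_univ, Set.image_univ]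
    exact (Finset.range_orderEmbOfFin K hj.symm).symm
  have hTmap : topIdx r j = Finset.univ.map
      ⟨fun k : Fin j => (⟨(k : ℕ) + r - j, by have := k.isLt; omega⟩ : Fin r),
        show Function.Injective _ from fun k1 k2 h => by
          have h1 := k1.isLt; have h2 := k2.isLt
          simp only [Fin.mk.injEq] at h
          exact Fin.ext (by omega)⟩ := by
    ext i
    simp only [topIdx, Finset.mem_filter, Finset.mem_univ, true_and, Finset.mem_map,
      Function.Embedding.coeFn_mk]
    constructor
    · intro hi
      exact ⟨⟨(i : ℕ) + j - r, by have := i.isLt; omega⟩,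
        Fin.ext (by simp; have := i.isLt; omega)⟩
    · rintro ⟨k, rfl⟩
      simp
      have := k.isLt
      omega
  rw [hKmap, hTmap, Finset.sum_map, Finset.sum_map]
  apply Finset.sum_le_sum
  intro k _
  apply hy
  have hb := strictMono_bound (K.orderEmbOfFin hj.symm).strictMono k
  simp only [Fin.le_def, Function.Embedding.coeFn_mk, RelEmbedding.coe_toEmbedding]
  have := k.isLt
  omega

lemma topIdx_succ {r : ℕ} (i : Fin r) :
    topIdx r ((i : ℕ) + 1) = insert (Fin.rev i) (topIdx r (i : ℕ)) := by
  classical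
  ext x
  simp only [topIdx, Finset.mem_filter, Finset.mem_univ, true_and, Finset.mem_insert,
    Fin.ext_iff, Fin.val_rev]
  have hx := x.isLt
  have hi := i.isLt
  omega

lemma rev_not_mem_topIdx {r : ℕ} (i : Fin r) : Fin.rev i ∉ topIdx r (i : ℕ) := by
  simp only [topIdx, Finset.mem_filter, Finset.mem_univ, true_and, Fin.val_rev]
  have := i.isLt
  omega

open Classical in
noncomputable def indSets (M : Matroid α) (j : ℕ) : Finset (Finset α) :=
  Finset.univ.filter (fun s => M.Indep ↑s ∧ s.card = j)

open Classical in
noncomputable def Sj (M : Matroid α) (j : ℕ) (w : α → ℝ) : ℝ :=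
  if h : (indSets M j).Nonempty then (indSets M j).sup' h (fun s => ∑ x ∈ s, w x) else 0

lemma Sj_continuous (M : Matroid α) (j : ℕ) : Continuous (Sj M j) := by
  classical
  unfold Sj
  split_ifs with h
  · exact Continuous.finset_sup'_apply h
      (fun s _ => continuous_finset_sum _ (fun x _ => continuous_apply x))
  · exact continuous_const

lemma phiB_mem {B : Set α} {a : α → ℝ} {b : α} (hb : b ∈ B) : phiB M B a b = a b := by
  simp [phiB, hb]

lemma phiB_not_mem {B : Set α} {a : α → ℝ} {e : α} (he : e ∉ B) :
    phiB M B a e = sInf (a '' (fundCircuit M B e \ {e})) := by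
  simp [phiB, he]

lemma Sj_eq_top (hE : M.E = Set.univ) {r : ℕ} (hrank : ∀ B, M.IsBase B → B.ncard = r)
    {B : Set α} (hB : M.IsBase B) (w : α → ℝ)
    (hmax : ∀ B', M.IsBase B' → wsum w B' ≤ wsum w B) (eb : Fin r ≃ B)
    {j : ℕ} (hj : j ≤ r) :
    Sj M j w = ∑ i ∈ topIdx r j,
      w (eb (Tuple.sort (fun i => w (eb i)) i)) := by
  classical
  set x : Fin r → ℝ := fun i => w (eb i) with hxdef
  set σ := Tuple.sort x with hσ
  have hy : Monotone (fun i => w (eb (σ i))) := Tuple.monotone_sort x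
  set ψ : Fin r → α := fun i => (eb (σ i) : α) with hψ
  have hψinj : Function.Injective ψ :=
    fun i1 i2 h => σ.injective (eb.injective (Subtype.coe_injective h))
  have hψB : ∀ i, ψ i ∈ B := fun i => (eb (σ i)).2
  -- generic transport: subsets of B of card j
  have htrans : ∀ u : Finset α, ↑u ⊆ B → u.card = j → ∑ c ∈ u, w c ≤
      ∑ i ∈ topIdx r j, w (eb (σ i)) := by
    intro u huB hucard
    set K : Finset (Fin r) := Finset.univ.filter (fun i => ψ i ∈ u) with hK
    have himg : Finset.image ψ K = u := by
      ext c
      simp only [Finset.mem_image, hK, Finset.mem_filter, Finset.mem_univ, true_and]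
      constructor
      · rintro ⟨i, hi, rfl⟩; exact hi
      · intro hc
        refine ⟨σ.symm (eb.symm ⟨c, huB hc⟩), ?_, ?_⟩ <;>
          simp [hψ]
        · exact hc
    have hKcard : K.card = j := by
      rw [← hucard, ← himg, Finset.card_image_of_injective _ hψinj]
    have hsum : ∑ c ∈ u, w c = ∑ i ∈ K, w (eb (σ i)) := by
      rw [← himg, Finset.sum_image (fun a _ b _ h => hψinj h)]
    rw [hsum, ← hKcard]
    exact sum_le_topIdx hy
  -- the witness set
  have hjtop : (topIdx r j).card = j := topIdx_card hj
  set s₀ : Finset α := Finset.image ψ (topIdx r j) with hs₀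
  have hs₀B : ↑s₀ ⊆ B := by
    intro c hc
    simp only [hs₀, Finset.coe_image, Set.mem_image] at hc
    obtain ⟨i, _, rfl⟩ := hc
    exact hψB i
  have hs₀card : s₀.card = j := by
    rw [hs₀, Finset.card_image_of_injective _ hψinj, hjtop]
  have hs₀mem : s₀ ∈ indSets M j := by
    simp only [indSets, Finset.mem_filter, Finset.mem_univ, true_and]
    exact ⟨hB.indep.subset hs₀B, hs₀card⟩
  have hne : (indSets M j).Nonempty := ⟨s₀, hs₀mem⟩
  have hs₀sum : ∑ c ∈ s₀, w c = ∑ i ∈ topIdx r j, w (eb (σ i)) := by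
    rw [hs₀, Finset.sum_image (fun a _ b _ h => hψinj h)]
  rw [Sj, dif_pos hne]
  apply le_antisymm
  · apply Finset.sup'_le
    intro t ht
    simp only [indSets, Finset.mem_filter, Finset.mem_univ, true_and] at ht
    obtain ⟨htind, htcard⟩ := ht
    obtain ⟨B₂, hB₂, htB₂, hB₂sub⟩ := htind.exists_isBase_subset_union_isBase hB
    set Bf := (Set.toFinite B).toFinset with hBf
    set B₂f := (Set.toFinite B₂).toFinset with hB₂f
    have htB₂f : t ⊆ B₂f := fun c hc => by
      simp only [hB₂f, Set.Finite.mem_toFinset]; exact htB₂ hc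
    set D : Finset α := B₂f \ t with hD
    have hDB : ↑D ⊆ B := by
      intro c hc
      simp only [hD, Finset.coe_sdiff, Set.mem_diff, hB₂f, Set.Finite.coe_toFinset] at hc
      rcases hB₂sub hc.1 with h | h
      · exact absurd h (by simpa using hc.2)
      · exact h
    have hDBf : D ⊆ Bf := fun c hc => by
      simp only [hBf, Set.Finite.mem_toFinset]; exact hDB hc
    have h1 : ∑ c ∈ t, w c = ∑ c ∈ B₂f, w c - ∑ c ∈ D, w c := by
      rw [hD, Finset.sum_sdiff_eq_sub htB₂f]; ring
    have h2 : ∑ c ∈ B₂f, w c ≤ ∑ c ∈ Bf, w c := hmax B₂ hB₂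
    have h3 : ∑ c ∈ Bf, w c - ∑ c ∈ D, w c = ∑ c ∈ Bf \ D, w c := by
      rw [Finset.sum_sdiff_eq_sub hDBf]
    have hcards : (Bf \ D).card = j := by
      have hBfcard : Bf.card = r := by
        rw [hBf, ← Set.ncard_eq_toFinset_card B (Set.toFinite B)]
        exact hrank B hB
      have hB₂fcard : B₂f.card = r := by
        rw [hB₂f, ← Set.ncard_eq_toFinset_card B₂ (Set.toFinite B₂)]
        exact hrank B₂ hB₂
      have hDcard : D.card = r - j := by
        rw [hD, Finset.card_sdiff_of_subset htB₂f, hB₂fcard, htcard]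
      rw [Finset.card_sdiff_of_subset hDBf, hBfcard, hDcard]
      omega
    have h4 : ∑ c ∈ Bf \ D, w c ≤ ∑ i ∈ topIdx r j, w (eb (σ i)) := by
      apply htrans
      · intro c hc
        simp only [Finset.coe_sdiff, Set.mem_diff] at hc
        have := hc.1
        simpa only [hBf, Set.Finite.coe_toFinset] using this
      · exact hcards
    linarith
  · have := Finset.le_sup' (fun s => ∑ c ∈ s, w c) hs₀mem
    rw [hs₀sum] at this
    exact this

lemma exists_base_phiB (hE : M.E = Set.univ) {r : ℕ} (hrank : ∀ B, M.IsBase B → B.ncard = r)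
    (w : α → ℝ) (hw : TropCircuitCond M w) :
    ∃ B, M.IsBase B ∧ (∀ B', M.IsBase B' → wsum w B' ≤ wsum w B) ∧ phiB M B w = w := by
  classical
  obtain ⟨B, hBmem, hBmax⟩ := Set.exists_max_image {B | M.IsBase B} (wsum w)
    (Set.toFinite _) M.exists_isBase
  refine ⟨B, hBmem, fun B' hB' => hBmax B' hB', ?_⟩
  funext e
  by_cases he : e ∈ B
  · exact phiB_mem he
  · rw [phiB_not_mem he]
    obtain ⟨hC, heC, hCB⟩ := fundCircuit_spec hE hBmem he
    have hlow : ∀ c ∈ fundCircuit M B e \ {e}, w e ≤ w c := by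
      intro c hc
      obtain ⟨hcB, hecl⟩ := fundCircuit_not_closure hE hBmem he hc
      have hbase := base_exchange_in hE hrank hBmem he hcB hecl
      have := hBmax _ hbase
      rw [wsum_exchange w he hcB] at this
      linarith
    have hmem : ∃ c ∈ fundCircuit M B e \ {e}, w c = w e := by
      obtain ⟨x, hx, y, hy, hxy, hwxy, hmin⟩ := hw _ hC
      rcases eq_or_ne x e with rfl | hxe
      · exact ⟨y, ⟨hy, fun h => hxy (Set.mem_singleton_iff.1 h).symm⟩, hwxy.symm⟩
      · refine ⟨x, ⟨hx, hxe⟩, le_antisymm (hmin e heC) (hlow x ⟨hx, hxe⟩)⟩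
    obtain ⟨c₀, hc₀, hc₀e⟩ := hmem
    have hleast : IsLeast (w '' (fundCircuit M B e \ {e})) (w e) := by
      constructor
      · exact ⟨c₀, hc₀, hc₀e⟩
      · rintro v ⟨c, hc, rfl⟩
        exact hlow c hc
    exact hleast.csInf_eq

lemma base_equiv {r : ℕ} (hrank : ∀ B, M.IsBase B → B.ncard = r) {B : Set α} (hB : M.IsBase B) :
    Nonempty (Fin r ≃ B) := by
  classical
  have hcard : Fintype.card B = r := by
    rw [← hrank B hB, Set.ncard_eq_toFinset_card', Set.toFinset_card]
  exact ⟨(Fintype.equivFinOfCardEq hcard).symm⟩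

end BergAux

open BergAux

/-- for a finite loopless matroid `M` of rank `r` and a continuous
symmetric function `g : ℝ^r → ℝ`, there is a unique continuous function
`G : Berg(M) → ℝ` with `G(φ_B(a)) = g(a b_1, …, a b_r)` for every basis `B`, every
enumeration `b_1, …, b_r` of `B` and every `a : B → ℝ`. Here `Berg(M)` is the
subtype of functions satisfying the tropical circuit condition, with the subspace
topology from the product topology on `α → ℝ`. -/
theorem universal_symmetric_function {α : Type*} [Fintype α] (M : Matroid α)
    (hE : M.E = Set.univ) (hloopless : ∀ e : α, M.Indep {e}) (r : ℕ)
    (hrank : ∀ B, M.IsBase B → B.ncard = r)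
    (g : (Fin r → ℝ) → ℝ) (hg : Continuous g)
    (hsym : ∀ (σ : Equiv.Perm (Fin r)) (x : Fin r → ℝ), g (x ∘ σ) = g x) :
    ∃! G : {w : α → ℝ // TropCircuitCond M w} → ℝ,
      Continuous G ∧
        ∀ (B : Set α), M.IsBase B → ∀ (eb : Fin r ≃ B) (a : α → ℝ)
          (h : TropCircuitCond M (phiB M B a)),
          G ⟨phiB M B a, h⟩ = g (fun i => a (eb i)) := by
  classical
  set Gfun : {w : α → ℝ // TropCircuitCond M w} → ℝ :=
    fun ω => g (fun i : Fin r => Sj M ((i : ℕ) + 1) ω.val - Sj M (i : ℕ) ω.val) with hGdef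
  have key : ∀ (B : Set α), M.IsBase B → ∀ (eb : Fin r ≃ B) (w : α → ℝ),
      (∀ B', M.IsBase B' → wsum w B' ≤ wsum w B) →
      (fun i : Fin r => Sj M ((i : ℕ) + 1) w - Sj M (i : ℕ) w) =
        (fun i => w (eb i)) ∘ (Fin.revPerm.trans (Tuple.sort (fun i => w (eb i)))) := by
    intro B hB eb w hmax
    funext i
    have h1 := Sj_eq_top hE hrank hB w hmax eb (j := (i : ℕ) + 1) i.isLt
    have h0 := Sj_eq_top hE hrank hB w hmax eb (j := (i : ℕ)) (le_of_lt i.isLt)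
    rw [h1, h0, topIdx_succ i, Finset.sum_insert (rev_not_mem_topIdx i),
      add_sub_cancel_right]
    simp
  have keyval : ∀ (B : Set α), M.IsBase B → ∀ (eb : Fin r ≃ B) (w : α → ℝ)
      (hw : TropCircuitCond M w), (∀ B', M.IsBase B' → wsum w B' ≤ wsum w B) →
      Gfun ⟨w, hw⟩ = g (fun i => w (eb i)) := by
    intro B hB eb w hw hmax
    rw [hGdef]
    simp only
    rw [key B hB eb w hmax]
    exact hsym _ _
  have hcont : Continuous Gfun := hg.comp (continuous_pi fun i =>
    ((Sj_continuous M _).comp continuous_subtype_val).sub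
      ((Sj_continuous M _).comp continuous_subtype_val))
  have hprop : ∀ B, M.IsBase B → ∀ (eb : Fin r ≃ B) (a : α → ℝ)
      (h : TropCircuitCond M (phiB M B a)),
      Gfun ⟨phiB M B a, h⟩ = g (fun i => a (eb i)) := by
    intro B hB eb a h
    set w := phiB M B a with hwdef
    have hloc : ∀ e ∉ B, ∀ c ∈ fundCircuit M B e \ {e}, w e ≤ w c := by
      intro e he c hc
      have hcB : c ∈ B := fundCircuit_diff_subset hE hB he hc
      rw [hwdef, phiB_not_mem he, phiB_mem hcB]
      exact csInf_le (Set.Finite.bddBelow (Set.toFinite _)) ⟨c, hc, rfl⟩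
    have hmax := max_of_local hE hrank hB w hloc
    rw [keyval B hB eb w h hmax]
    congr 1
    funext i
    exact phiB_mem (eb i).2
  refine ⟨Gfun, ⟨hcont, hprop⟩, ?_⟩
  intro G' hG'
  funext ω
  obtain ⟨w, hw⟩ := ω
  obtain ⟨B, hB, hmax, hphi⟩ := exists_base_phiB hE hrank w hw
  obtain ⟨eb⟩ := base_equiv hrank hB
  have h' : TropCircuitCond M (phiB M B w) := by rw [hphi]; exact hw
  have heq : (⟨phiB M B w, h'⟩ : {w : α → ℝ // TropCircuitCond M w}) = ⟨w, hw⟩ :=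
    Subtype.ext hphi
  have e1 := hG'.2 B hB eb w h'
  have e2 := hprop B hB eb w h'
  rw [heq] at e1 e2
  rw [e1]
  exact e2.symm
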